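/- Wigner–Yanase concavity: for any bounded operator B on a Hilbert space, the map γ ↦ Tr(γ^{1/2} B† γ^{1/2} B) is concave on the set of nonnegative trace-class operators γ. -/

import Mathlib

/-!
With `b = vec B`, `Tr(γ^{1/2} B† γ^{1/2} B) = ⟪b, ((γ^{1/2})ᵀ ⊗ γ^{1/2}) b⟫`, and
`(γ^{1/2})ᵀ ⊗ γ^{1/2} = √L √R` for the commuting positive operators `L = γᵀ ⊗ 1` and
`R = 1 ⊗ γ`, both linear in `γ`. It therefore suffices that `(L, R) ↦ √L √R`, the operator
geometric mean of commuting pairs, is superadditive. For `L` invertible, `√L √R` is the largest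
positive `X` with `X L⁻¹ X ≤ R`: conjugating by `L^{-1/2}` turns this into `Y² ≤ L⁻¹ R`, and the
square root is operator monotone. For `X = ∑ √Lᵢ √Rᵢ` the Cauchy–Schwarz inequality
`X (∑ Lᵢ)⁻¹ X ≤ ∑ Rᵢ` holds, and replacing `∑ Lᵢ` by `∑ Lᵢ + ε` removes the invertibility
assumption in the limit `ε → 0`.
-/

open Matrix
open scoped ComplexOrder
namespace Matrix.PosSemidef
noncomputable def sqrt {n 𝕜 : Type*} [Fintype n] [RCLike 𝕜] [DecidableEq n] {A : Matrix n n 𝕜}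
    (hA : A.PosSemidef) : Matrix n n 𝕜 :=
  hA.1.eigenvectorUnitary.1 * diagonal ((↑) ∘ (√·) ∘ hA.1.eigenvalues) *
  (star hA.1.eigenvectorUnitary : Matrix n n 𝕜)
end Matrix.PosSemidef

open scoped MatrixOrder Kronecker
open CFC Ring Filter Topology

theorem Commute.ringInverse_left {M₀ : Type*} [MonoidWithZero M₀] {a b : M₀} (h : Commute a b) :
    Commute a⁻¹ʳ b := by
  by_cases ha : IsUnit a
  · obtain ⟨u, rfl⟩ := ha
    simpa using h.units_inv_left
  · simp [inverse_non_unit _ ha]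

theorem star_sum_mul_mul_sum_le {R ι : Type*} [Ring R] [PartialOrder R] [StarRing R]
    [StarOrderedRing R] (s : Finset ι) (m n : ι → R) {p r : R}
    (hp : ∑ i ∈ s, star (m i) * m i ≤ p) (hr : p * r = 1) :
    star (∑ i ∈ s, star (m i) * n i) * r * ∑ i ∈ s, star (m i) * n i ≤
      ∑ i ∈ s, star (n i) * n i := by
  set x := ∑ i ∈ s, star (m i) * n i
  set k := r * x
  have hsq : 0 ≤ ∑ i ∈ s, star (m i * k - n i) * (m i * k - n i) :=
    Finset.sum_nonneg fun i _ => star_mul_self_nonneg _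
  have hgap : 0 ≤ star k * (p - ∑ i ∈ s, star (m i) * m i) * k :=
    star_left_conjugate_nonneg (sub_nonneg.2 hp) k
  have hsum : ∑ i ∈ s, star (m i * k - n i) * (m i * k - n i) =
      star k * (∑ i ∈ s, star (m i) * m i) * k - star k * x - star x * k +
        ∑ i ∈ s, star (n i) * n i := by
    simp only [x, star_sum, star_sub, star_mul, star_star, sub_mul, mul_sub, Finset.mul_sum,
      Finset.sum_mul, ← Finset.sum_sub_distrib, ← Finset.sum_add_distrib, mul_assoc]
    exact Finset.sum_congr rfl fun i _ => by abel
  have hkpk : star k * p * k = star k * x := by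
    simp only [k, star_mul, mul_assoc, ← mul_assoc p, hr, one_mul]
  rw [← sub_nonneg]
  convert add_nonneg hsq hgap using 1
  rw [hsum, mul_sub, sub_mul, hkpk]
  simp only [k]
  noncomm_ring

namespace CFC

variable {A : Type*} [CStarAlgebra A] [PartialOrder A] [StarOrderedRing A]

theorem le_of_mul_self_le_mul_self {x y : A} (hx : 0 ≤ x) (hy : 0 ≤ y) (h : x * x ≤ y * y) :
    x ≤ y := by
  rw [← sqrt_mul_self x, ← sqrt_mul_self y]
  exact sqrt_le_sqrt _ _ h

theorem sqrt_smul {a : A} (ha : 0 ≤ a) {t : ℝ} (ht : 0 ≤ t) : sqrt (t • a) = √t • sqrt a := by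
  rw [sqrt_eq_iff _ _ (smul_nonneg ht ha) (smul_nonneg (Real.sqrt_nonneg t) (sqrt_nonneg a)),
    smul_mul_smul_comm, Real.mul_self_sqrt ht, sqrt_mul_sqrt_self a]

theorem _root_.Commute.cfcSqrt {a b : A} (h : Commute a b) : Commute (sqrt a) (sqrt b) := by
  rw [sqrt_eq_cfc (a := a), sqrt_eq_cfc (a := b)]
  exact ((h.cfc_nnreal _).symm.cfc_nnreal _).symm

theorem le_sqrt_mul_sqrt_of_mul_ringInverse_mul_le {a b x : A} (ha : IsStrictlyPositive a)
    (hb : 0 ≤ b) (hab : Commute a b) (hx : 0 ≤ x) (h : x * a⁻¹ʳ * x ≤ b) :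
    x ≤ sqrt a * sqrt b := by
  set c := (sqrt a)⁻¹ʳ
  have hc_eq : c = sqrt a⁻¹ʳ := sqrt_ringInverse.symm
  have hc : 0 ≤ c := hc_eq ▸ sqrt_nonneg _
  have hcc : c * c = a⁻¹ʳ := hc_eq ▸ sqrt_mul_sqrt_self _ ha.ringInverse.nonneg
  have hac : sqrt a * c = 1 := mul_inverse_cancel _ ha.isUnit_cfcSqrt
  have hca : c * sqrt a = 1 := inverse_mul_cancel _ ha.isUnit_cfcSqrt
  have hab' : Commute (sqrt a) (sqrt b) := hab.cfcSqrt
  have hcb : Commute c (sqrt b) := hab'.ringInverse_left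
  have hsquare : (c * x * c) * (c * x * c) ≤ (c * sqrt b) * (c * sqrt b) :=
    calc (c * x * c) * (c * x * c) = c * (x * (c * c) * x) * c := by simp only [mul_assoc]
      _ ≤ c * b * c := hc.isSelfAdjoint.conjugate_le_conjugate (hcc ▸ h)
      _ = (c * sqrt b) * (c * sqrt b) := by
        conv_lhs => rw [← sqrt_mul_sqrt_self b]
        rw [mul_assoc c, mul_assoc (sqrt b), ← hcb.eq]
        simp only [mul_assoc]
  have hy : c * x * c ≤ c * sqrt b :=
    le_of_mul_self_le_mul_self (hc.isSelfAdjoint.conjugate_nonneg hx)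
      (hcb.mul_nonneg hc (sqrt_nonneg _)) hsquare
  calc x = sqrt a * (c * x * c) * sqrt a := by
        simp only [← mul_assoc, hac, one_mul]
        simp only [mul_assoc, hca, mul_one]
    _ ≤ sqrt a * (c * sqrt b) * sqrt a := (sqrt_nonneg a).isSelfAdjoint.conjugate_le_conjugate hy
    _ = sqrt a * sqrt b := by rw [← mul_assoc, hac, one_mul, hab'.eq]

theorem sum_sqrt_mul_sqrt_le_of_isStrictlyPositive {ι : Type*} (s : Finset ι) {a b : ι → A}
    (ha : ∀ i ∈ s, 0 ≤ a i) (hb : ∀ i ∈ s, 0 ≤ b i) (hab : ∀ i ∈ s, Commute (a i) (b i))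
    {p : A} (hp : IsStrictlyPositive p) (hap : ∑ i ∈ s, a i ≤ p)
    (hpb : Commute p (∑ i ∈ s, b i)) :
    ∑ i ∈ s, sqrt (a i) * sqrt (b i) ≤ sqrt p * sqrt (∑ i ∈ s, b i) := by
  have hx : 0 ≤ ∑ i ∈ s, sqrt (a i) * sqrt (b i) := Finset.sum_nonneg fun i hi =>
    (hab i hi).cfcSqrt.mul_nonneg (sqrt_nonneg _) (sqrt_nonneg _)
  have hstar (c : A) : star (sqrt c) = sqrt c := (sqrt_nonneg c).isSelfAdjoint.star_eq
  have hsq {c : ι → A} (hc : ∀ i ∈ s, 0 ≤ c i) :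
      ∑ i ∈ s, star (sqrt (c i)) * sqrt (c i) = ∑ i ∈ s, c i :=
    Finset.sum_congr rfl fun i hi => by rw [hstar, sqrt_mul_sqrt_self _ (hc i hi)]
  refine le_sqrt_mul_sqrt_of_mul_ringInverse_mul_le hp (Finset.sum_nonneg hb) hpb hx ?_
  have h := star_sum_mul_mul_sum_le s (fun i => sqrt (a i)) (fun i => sqrt (b i))
    ((hsq ha).trans_le hap) (mul_inverse_cancel _ hp.isUnit)
  rw [hsq hb] at h
  simpa only [hstar, hx.isSelfAdjoint.star_eq] using h

theorem sum_sqrt_mul_sqrt_le {ι : Type*} (s : Finset ι) {a b : ι → A}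
    (ha : ∀ i ∈ s, 0 ≤ a i) (hb : ∀ i ∈ s, 0 ≤ b i)
    (hab : ∀ i ∈ s, ∀ j ∈ s, Commute (a i) (b j)) :
    ∑ i ∈ s, sqrt (a i) * sqrt (b i) ≤ sqrt (∑ i ∈ s, a i) * sqrt (∑ i ∈ s, b i) := by
  set p := ∑ i ∈ s, a i
  have hp : 0 ≤ p := Finset.sum_nonneg ha
  have hreg : Tendsto (fun ε : ℝ => p + algebraMap ℝ A ε) (𝓝[>] 0) (𝓝[{x | 0 ≤ x}] p) := by
    refine tendsto_nhdsWithin_iff.2 ⟨?_, eventually_nhdsWithin_of_forall fun ε hε => ?_⟩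
    · simpa using ((continuous_algebraMap ℝ A).tendsto 0).const_add p |>.mono_left
        nhdsWithin_le_nhds
    · exact add_nonneg hp (isStrictlyPositive_algebraMap hε).nonneg
  have hlim := ((continuousOn_sqrt p hp).tendsto.comp hreg).mul_const (sqrt (∑ i ∈ s, b i))
  refine ge_of_tendsto hlim (eventually_nhdsWithin_of_forall fun ε hε => ?_)
  have hε' : IsStrictlyPositive (algebraMap ℝ A ε) := isStrictlyPositive_algebraMap hε
  exact sum_sqrt_mul_sqrt_le_of_isStrictlyPositive s ha hb (fun i hi => hab i hi i hi)
    (IsStrictlyPositive.nonneg_add hp hε') (le_add_of_nonneg_right hε'.nonneg)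
    ((Commute.sum_right _ _ _ fun j hj => Commute.sum_left _ _ _ fun i hi => hab i hi j hj).add_left
      (Algebra.commutes _ _))

end CFC

namespace Matrix

section

variable {𝕜 n m : Type*} [RCLike 𝕜] [Fintype n] [Fintype m]

theorem star_vec_dotProduct_kronecker_mulVec_vec {R : Type*} [CommRing R] [StarRing R]
    (S B : Matrix n n R) : star (vec B) ⬝ᵥ (Sᵀ ⊗ₖ S) *ᵥ vec B = (S * Bᴴ * S * B).trace := by
  rw [kronecker_mulVec_vec, transpose_transpose, star_vec_dotProduct_vec]
  simp only [Matrix.mul_assoc]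
  rw [trace_mul_comm S]
  simp only [Matrix.mul_assoc]

theorem re_star_dotProduct_mulVec_mono (x : n → 𝕜) :
    Monotone fun A : Matrix n n 𝕜 => RCLike.re (star x ⬝ᵥ A *ᵥ x) := by
  intro A B hAB
  simpa [sub_mulVec, dotProduct_sub] using (le_iff.1 hAB).re_dotProduct_nonneg x

variable [DecidableEq n] [DecidableEq m]

theorem PosSemidef.sqrt_eq_cfcSqrt {A : Matrix n n 𝕜} (hA : A.PosSemidef) :
    hA.sqrt = CFC.sqrt A := by
  rw [sqrt_eq_real_sqrt A hA.nonneg, cfcₙ_eq_cfc, hA.1.cfc_eq, IsHermitian.cfc,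
    Unitary.conjStarAlgAut_apply]
  rfl

theorem sqrt_kronecker {A : Matrix n n 𝕜} {B : Matrix m m 𝕜} (hA : 0 ≤ A) (hB : 0 ≤ B) :
    CFC.sqrt (A ⊗ₖ B) = CFC.sqrt A ⊗ₖ CFC.sqrt B := by
  rw [sqrt_eq_iff _ _ (hA.posSemidef.kronecker hB.posSemidef).nonneg
    ((sqrt_nonneg A).posSemidef.kronecker (sqrt_nonneg B).posSemidef).nonneg,
    ← mul_kronecker_mul, sqrt_mul_sqrt_self A, sqrt_mul_sqrt_self B]

theorem sqrt_transpose (A : Matrix n n 𝕜) : CFC.sqrt Aᵀ = (CFC.sqrt A)ᵀ := by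
  by_cases hA : 0 ≤ A
  · rw [sqrt_eq_iff _ _ hA.posSemidef.transpose.nonneg
      (sqrt_nonneg A).posSemidef.transpose.nonneg, ← transpose_mul, sqrt_mul_sqrt_self A]
  · have hAt : ¬ 0 ≤ Aᵀ := fun h => hA (by simpa using h.posSemidef.transpose.nonneg)
    rw [sqrt_of_not_nonneg hA, sqrt_of_not_nonneg hAt, transpose_zero]

end

section

open scoped Matrix.Norms.L2Operator

variable {n : Type*} [Fintype n] [DecidableEq n]

theorem transpose_sqrt_kronecker_sqrt_add_le {x y : Matrix n n ℂ} (hx : 0 ≤ x) (hy : 0 ≤ y) :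
    (CFC.sqrt x)ᵀ ⊗ₖ CFC.sqrt x + (CFC.sqrt y)ᵀ ⊗ₖ CFC.sqrt y ≤
      (CFC.sqrt (x + y))ᵀ ⊗ₖ CFC.sqrt (x + y) := by
  have hsplit {z : Matrix n n ℂ} (hz : 0 ≤ z) : (CFC.sqrt z)ᵀ ⊗ₖ CFC.sqrt z =
      CFC.sqrt (zᵀ ⊗ₖ (1 : Matrix n n ℂ)) * CFC.sqrt ((1 : Matrix n n ℂ) ⊗ₖ z) := by
    rw [sqrt_kronecker hz.posSemidef.transpose.nonneg PosSemidef.one.nonneg,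
      sqrt_kronecker PosSemidef.one.nonneg hz, sqrt_one, sqrt_transpose, ← mul_kronecker_mul,
      Matrix.mul_one, Matrix.one_mul]
  have hcomm (z w : Matrix n n ℂ) :
      Commute (zᵀ ⊗ₖ (1 : Matrix n n ℂ)) ((1 : Matrix n n ℂ) ⊗ₖ w) := by
    simp only [Commute, SemiconjBy, ← mul_kronecker_mul, Matrix.mul_one, Matrix.one_mul]
  have h := sum_sqrt_mul_sqrt_le Finset.univ (a := ![xᵀ ⊗ₖ 1, yᵀ ⊗ₖ 1])
    (b := ![1 ⊗ₖ x, 1 ⊗ₖ y])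
    (by simp [Fin.forall_fin_two, hx.posSemidef.transpose.kronecker PosSemidef.one |>.nonneg,
      hy.posSemidef.transpose.kronecker PosSemidef.one |>.nonneg])
    (by simp [Fin.forall_fin_two, PosSemidef.one.kronecker hx.posSemidef |>.nonneg,
      PosSemidef.one.kronecker hy.posSemidef |>.nonneg])
    (by simp [Fin.forall_fin_two, hcomm])
  simp only [Fin.sum_univ_two, Matrix.cons_val_zero, Matrix.cons_val_one] at h
  rw [hsplit hx, hsplit hy, hsplit (add_nonneg hx hy), transpose_add, add_kronecker, kronecker_add]
  exact h

theorem transpose_sqrt_kronecker_sqrt_smul {x : Matrix n n ℂ} (hx : 0 ≤ x) {t : ℝ} (ht : 0 ≤ t) :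
    (CFC.sqrt (t • x))ᵀ ⊗ₖ CFC.sqrt (t • x) = t • ((CFC.sqrt x)ᵀ ⊗ₖ CFC.sqrt x) := by
  rw [sqrt_smul hx ht, transpose_smul, smul_kronecker, kronecker_smul, smul_smul,
    Real.mul_self_sqrt ht]

theorem concaveOn_transpose_sqrt_kronecker_sqrt :
    ConcaveOn ℝ (Set.Ici (0 : Matrix n n ℂ)) fun γ => (CFC.sqrt γ)ᵀ ⊗ₖ CFC.sqrt γ := by
  refine ⟨convex_Ici 0, fun x hx y hy a b ha hb _ => ?_⟩
  rw [← transpose_sqrt_kronecker_sqrt_smul hx ha, ← transpose_sqrt_kronecker_sqrt_smul hy hb]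
  exact transpose_sqrt_kronecker_sqrt_add_le (smul_nonneg ha hx) (smul_nonneg hb hy)

theorem concaveOn_re_trace_sqrt_mul_conjTranspose_mul_sqrt_mul (B : Matrix n n ℂ) :
    ConcaveOn ℝ (Set.Ici 0) fun γ : Matrix n n ℂ =>
      (CFC.sqrt γ * Bᴴ * CFC.sqrt γ * B).trace.re := by
  simp only [← star_vec_dotProduct_kronecker_mulVec_vec]
  refine ⟨convex_Ici 0, fun x hx y hy a b ha hb hab => ?_⟩
  have h := re_star_dotProduct_mulVec_mono (vec B)
    (concaveOn_transpose_sqrt_kronecker_sqrt.2 hx hy ha hb hab)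
  simpa [add_mulVec, smul_mulVec, dotProduct_add, dotProduct_smul] using h

end

end Matrix

theorem wigner_yanase_concavity {n : Type*} [Fintype n] [DecidableEq n]
    (B γ₁ γ₂ : Matrix n n ℂ) (h1 : γ₁.PosSemidef) (h2 : γ₂.PosSemidef)
    (t : ℝ) (ht0 : 0 ≤ t) (ht1 : t ≤ 1)
    (h12 : (t • γ₁ + (1 - t) • γ₂).PosSemidef) :
    t * ((h1.sqrt * Bᴴ * h1.sqrt * B).trace).re +
        (1 - t) * ((h2.sqrt * Bᴴ * h2.sqrt * B).trace).re ≤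
      ((h12.sqrt * Bᴴ * h12.sqrt * B).trace).re := by
  rw [h1.sqrt_eq_cfcSqrt, h2.sqrt_eq_cfcSqrt, h12.sqrt_eq_cfcSqrt]
  exact (concaveOn_re_trace_sqrt_mul_conjTranspose_mul_sqrt_mul B).2 h1.nonneg h2.nonneg ht0
    (sub_nonneg.2 ht1) (add_sub_cancel t 1)
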